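/- Let μ be a monotone measure on a finite nonempty set X and f : X → ℝ. Then the Choquet integral with respect to the dual measure μ̄ satisfies ∫ f dμ̄ = ∑_{∅ ≠ B ⊆ X} M_μ(B) · max_{x ∈ B} f(x), where M_μ is the Möbius transform of μ. -/

import Mathlib

/-
By Möbius inversion `μ C = ∑_{B ⊆ C} M_μ(B)`, so `μ̄(A) = ∑_{B ∩ A ≠ ∅} M_μ(B)`: the dual measure is a
linear combination of the set functions `A ↦ [A meets B]`. The Choquet sum is linear in the set
function, and against `A ↦ [A meets B]` it telescopes to the value of `f` at the last element of `B`
in the enumeration, which is `max_B f` because the enumeration sorts `f`.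
-/

open Finset

/-- The set `{x*_k, …, x*_{n-1}}` (0-indexed): the image under the enumeration `e`
of the indices `≥ k`. -/
def upSet {X : Type*} [DecidableEq X] {n : ℕ} (e : Fin n ≃ X) (k : ℕ) : Finset X :=
  (Finset.univ.filter fun j : Fin n => k ≤ (j : ℕ)).image e

/-- The Choquet integral of `f` with respect to the set function `μ`, computed via an
enumeration `e : Fin n ≃ X` (assumed to sort `f` nondecreasingly):
`∑ i, f(x*_i) · [μ(A*_i) − μ(A*_{i+1})]` where `A*_i = {x*_i, …, x*_{n-1}}`
(note `A*_n = ∅`, and `μ ∅ = 0` for a monotone measure). -/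
def choquetSum {X : Type*} [DecidableEq X] {n : ℕ} (μ : Finset X → ℝ) (f : X → ℝ)
    (e : Fin n ≃ X) : ℝ :=
  ∑ i : Fin n, f (e i) * (μ (upSet e i) - μ (upSet e ((i : ℕ) + 1)))

/-- The dual measure `μ̄(A) := μ(X) − μ(X \ A)`. -/
def dualMeasure {X : Type*} [Fintype X] [DecidableEq X] (μ : Finset X → ℝ) :
    Finset X → ℝ :=
  fun A => μ Finset.univ - μ (Finset.univ \ A)

/-- The Möbius transform `M_μ(B) := ∑_{A ⊆ B} (−1)^{|B|−|A|} μ(A)`. -/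
def mobius {X : Type*} (μ : Finset X → ℝ) (B : Finset X) : ℝ :=
  ∑ A ∈ B.powerset, (-1 : ℝ) ^ (B.card - A.card) * μ A

section

variable {X : Type*}

lemma sum_Icc_neg_one_pow_card_sub [DecidableEq X] {A C : Finset X} (h : A ⊆ C) :
    ∑ B ∈ Icc A C, (-1 : ℝ) ^ (#B - #A) = if A = C then 1 else 0 := by
  have hinj : Set.InjOn (A ∪ ·) ((C \ A).powerset : Set (Finset X)) := fun D hD D' hD' hDD' => by
    simp only [coe_powerset, Set.mem_preimage, Set.mem_powerset_iff, coe_subset,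
      subset_sdiff] at hD hD'
    rw [← union_sdiff_cancel_left hD.2.symm, ← union_sdiff_cancel_left hD'.2.symm]
    exact congrArg (· \ A) hDD'
  calc ∑ B ∈ Icc A C, (-1 : ℝ) ^ (#B - #A)
      = ∑ D ∈ (C \ A).powerset, (-1 : ℝ) ^ #D := by
        rw [Icc_eq_image_powerset h, sum_image hinj]
        refine sum_congr rfl fun D hD => ?_
        rw [card_union_of_disjoint (subset_sdiff.1 (mem_powerset.1 hD)).2.symm,
          Nat.add_sub_cancel_left]
    _ = if C \ A = ∅ then 1 else 0 := by exact_mod_cast sum_powerset_neg_one_pow_card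
    _ = if A = C then 1 else 0 := by
        have hempty : C \ A = ∅ ↔ A = C := by
          rw [sdiff_eq_empty_iff_subset]
          exact ⟨h.antisymm, Eq.ge⟩
        simp only [hempty]

lemma sum_powerset_mobius [DecidableEq X] (μ : Finset X → ℝ) (C : Finset X) :
    ∑ B ∈ C.powerset, mobius μ B = μ C := by
  calc ∑ B ∈ C.powerset, mobius μ B
      = ∑ A ∈ C.powerset, ∑ B ∈ Icc A C, (-1 : ℝ) ^ (#B - #A) * μ A := by
        refine sum_comm' fun B A => ?_
        simp only [mem_powerset, mem_Icc]
        exact ⟨fun h => ⟨⟨h.2, h.1⟩, h.2.trans h.1⟩, fun h => ⟨h.1.2, h.1.1⟩⟩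
    _ = ∑ A ∈ C.powerset, if A = C then μ A else 0 := by
        refine sum_congr rfl fun A hA => ?_
        rw [← sum_mul, sum_Icc_neg_one_pow_card_sub (mem_powerset.1 hA), boole_mul]
    _ = μ C := by rw [sum_ite_eq', if_pos (mem_powerset_self C)]

lemma dualMeasure_eq_sum_mobius [Fintype X] [DecidableEq X] (μ : Finset X → ℝ) :
    dualMeasure μ =
      fun A => ∑ B ∈ univ.powerset, mobius μ B * if ¬Disjoint B A then 1 else 0 := by
  funext A
  have hpowerset : (univ \ A).powerset = univ.powerset.filter (Disjoint · A) := by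
    ext B; simp [subset_sdiff]
  rw [dualMeasure, ← sum_powerset_mobius μ univ, ← sum_powerset_mobius μ (univ \ A), hpowerset,
    ← sum_filter_not_add_sum_filter univ.powerset (Disjoint · A)]
  simp only [mul_boole, sum_ite, sum_const_zero, add_zero, add_sub_cancel_right]

lemma choquetSum_sum_mul [DecidableEq X] {n : ℕ} {ι : Type*} (s : Finset ι) (c : ι → ℝ)
    (ν : ι → Finset X → ℝ) (f : X → ℝ) (e : Fin n ≃ X) :
    choquetSum (fun A => ∑ i ∈ s, c i * ν i A) f e = ∑ i ∈ s, c i * choquetSum (ν i) f e := by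
  simp only [choquetSum, ← sum_sub_distrib, ← mul_sub, mul_sum]
  rw [sum_comm]
  refine sum_congr rfl fun i _ => sum_congr rfl fun k _ => by ring

section Enumeration

variable {n : ℕ} (e : Fin n ≃ X)

def lastPos (B : Finset X) (hB : B.Nonempty) : Fin n :=
  (B.map e.symm.toEmbedding).max' hB.map

lemma apply_lastPos_mem {B : Finset X} (hB : B.Nonempty) : e (lastPos e B hB) ∈ B := by
  simpa [lastPos] using mem_map_equiv.1 ((B.map e.symm.toEmbedding).max'_mem hB.map)

lemma le_lastPos {B : Finset X} (hB : B.Nonempty) {x : X} (hx : x ∈ B) :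
    e.symm x ≤ lastPos e B hB :=
  le_max' _ _ (mem_map_of_mem e.symm.toEmbedding hx)

lemma apply_lastPos_eq_sup' {f : X → ℝ} (hsort : Monotone (f ∘ e)) {B : Finset X}
    (hB : B.Nonempty) : f (e (lastPos e B hB)) = B.sup' hB f :=
  le_antisymm (le_sup' f (apply_lastPos_mem e hB))
    (sup'_le _ _ fun x hx => by simpa using hsort (le_lastPos e hB hx))

variable [DecidableEq X]

lemma mem_upSet {k : ℕ} {x : X} : x ∈ upSet e k ↔ k ≤ (e.symm x : ℕ) := by
  simp only [upSet, mem_image, mem_filter, mem_univ, true_and]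
  exact ⟨fun ⟨j, hj, hjx⟩ => hjx ▸ by simpa using hj, fun h => ⟨e.symm x, h, e.apply_symm_apply x⟩⟩

lemma not_disjoint_upSet_iff {B : Finset X} (hB : B.Nonempty) (k : ℕ) :
    ¬Disjoint B (upSet e k) ↔ k ≤ lastPos e B hB := by
  simp only [not_disjoint_iff, mem_upSet]
  exact ⟨fun ⟨x, hx, hk⟩ => hk.trans (le_lastPos e hB hx),
    fun hk => ⟨_, apply_lastPos_mem e hB, by simpa using hk⟩⟩

lemma choquetSum_indicator_not_disjoint {B : Finset X} (hB : B.Nonempty) (f : X → ℝ) :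
    choquetSum (fun A => if ¬Disjoint B A then 1 else 0) f e = f (e (lastPos e B hB)) := by
  simp only [choquetSum, not_disjoint_upSet_iff e hB]
  -- the weight `[i ≤ lastPos e B hB] - [i + 1 ≤ lastPos e B hB]` of `f (e i)` is `[i = lastPos e B hB]`
  rw [Fintype.sum_eq_single (lastPos e B hB) fun i hi => ?_]
  · simp
  have : (i : ℕ) ≠ lastPos e B hB := Fin.val_ne_iff.2 hi
  split_ifs <;> first | omega | ring

end Enumeration

end

theorem choquet_integral_dual_eq_mobius_max_general
    {X : Type*} [Fintype X] [DecidableEq X] {n : ℕ}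
    (μ : Finset X → ℝ)
    (f : X → ℝ) (e : Fin n ≃ X) (hsort : Monotone (f ∘ e)) :
    choquetSum (dualMeasure μ) f e =
      ∑ B ∈ (Finset.univ : Finset X).powerset,
        if hB : B.Nonempty then mobius μ B * B.sup' hB f else 0 := by
  rw [dualMeasure_eq_sum_mobius, choquetSum_sum_mul]
  refine sum_congr rfl fun B _ => ?_
  rcases B.eq_empty_or_nonempty with rfl | hB
  · simp [choquetSum]
  · rw [dif_pos hB, choquetSum_indicator_not_disjoint e hB, apply_lastPos_eq_sup' e hsort hB]

/-- `∫ f dμ̄ = ∑_{∅ ≠ B ⊆ X} M_μ(B) · max_{x ∈ B} f(x)`, where `μ̄` is the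
dual measure and `M_μ` the Möbius transform of `μ`. -/
theorem choquet_integral_dual_eq_mobius_max
    {X : Type*} [Fintype X] [DecidableEq X] {n : ℕ} (hn : 0 < n)
    (μ : Finset X → ℝ) (hμ_empty : μ ∅ = 0)
    (hμ_mono : ∀ A B : Finset X, A ⊆ B → μ A ≤ μ B)
    (f : X → ℝ) (e : Fin n ≃ X) (hsort : Monotone (f ∘ e)) :
    choquetSum (dualMeasure μ) f e =
      ∑ B ∈ (Finset.univ : Finset X).powerset,
        if hB : B.Nonempty then mobius μ B * B.sup' hB f else 0 :=
  choquet_integral_dual_eq_mobius_max_general μ f e hsort
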